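/- arXiv:2401.14568 — 3 statements merged into one kernel-verified Lean document; each statement's English description precedes it below -/
import Mathlib

section
/- With ℓ, M, α as above, the total length of the curve after M² iterations, namely 4^{M²} · ℓ_{M²}, is at most e·ℓ and at least ℓ. -/
/-- With `ℓ_k = ℓ · (2(1+cos α))^{-k}`, `0 ≤ α ≤ 1/M`, `M ≥ 1`, the total length of the curve
after `M²` iterations, namely `4^{M²} · ℓ_{M²}`, is at least `ℓ` and at most `e·ℓ`. -/
theorem stmt_4 (ℓ : ℝ) (M : ℕ) (α : ℝ)
    (hℓ : 0 < ℓ) (hM : 0 < M) (hα₀ : 0 ≤ α) (hα₁ : α ≤ 1 / M) :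
    ℓ ≤ (4 : ℝ) ^ (M ^ 2) * (ℓ * ((2 * (1 + Real.cos α))⁻¹) ^ (M ^ 2)) ∧
    (4 : ℝ) ^ (M ^ 2) * (ℓ * ((2 * (1 + Real.cos α))⁻¹) ^ (M ^ 2)) ≤ Real.exp 1 * ℓ := by
  have hM1 : (1:ℝ) ≤ M := by exact_mod_cast hM
  set n := M ^ 2 with hn
  have hnR : (1:ℝ) ≤ (n:ℝ) := by
    have : (1:ℕ) ≤ n := Nat.one_le_pow _ _ hM
    exact_mod_cast this
  have hnpos : (0:ℝ) < (n:ℝ) := by linarith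
  have hα2 : α ^ 2 ≤ 1 / (n:ℝ) := by
    have h := mul_le_mul hα₁ hα₁ hα₀ (by positivity : (0:ℝ) ≤ 1 / M)
    have hnc : ((n:ℝ)) = (M:ℝ) ^ 2 := by rw [hn]; push_cast; ring
    rw [hnc]
    calc α ^ 2 = α * α := sq α
      _ ≤ 1 / M * (1 / M) := h
      _ = 1 / (M:ℝ) ^ 2 := by ring
  have hcos : 1 - 1 / (2 * (n:ℝ)) ≤ Real.cos α := by
    have h1 := Real.one_sub_sq_div_two_le_cos (x := α)
    have h2 : α ^ 2 / 2 ≤ 1 / (2 * (n:ℝ)) := by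
      rw [show 1 / (2 * (n:ℝ)) = (1 / (n:ℝ)) / 2 by ring]
      linarith
    linarith
  have hcos1 : Real.cos α ≤ 1 := Real.cos_le_one α
  set r := 2 * (1 + Real.cos α) with hr
  have hr3 : (3:ℝ) ≤ r := by
    have : 1 / (2 * (n:ℝ)) ≤ 1 / 2 := by
      apply div_le_div_of_nonneg_left (by norm_num) (by norm_num); linarith
    rw [hr]; linarith
  have hrpos : (0:ℝ) < r := by linarith
  have hr4 : r ≤ 4 := by rw [hr]; linarith
  have key : (4:ℝ) ^ n * (ℓ * (r⁻¹) ^ n) = ℓ * (4 * r⁻¹) ^ n := by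
    rw [mul_pow]; ring
  set x : ℝ := 1 - 1 / (4 * (n:ℝ)) with hx
  have hxpos : (0:ℝ) < x := by
    have : 1 / (4 * (n:ℝ)) ≤ 1 / 4 := by
      apply div_le_div_of_nonneg_left (by norm_num) (by norm_num); linarith
    rw [hx]; linarith
  constructor
  · rw [key]
    have h1 : (1:ℝ) ≤ 4 * r⁻¹ := by
      have := (one_le_div hrpos).mpr hr4
      rwa [div_eq_mul_inv] at this
    exact le_mul_of_one_le_right hℓ.le (one_le_pow₀ h1)
  · rw [key]
    have h4x : 4 * x ≤ r := by
      rw [hx, hr]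
      have h1 : 4 * (1 - 1 / (4 * (n:ℝ))) = 4 - 1 / (n:ℝ) := by field_simp
      rw [h1]
      have heq : 1 / (n:ℝ) = 2 * (1 / (2 * (n:ℝ))) := by ring
      linarith
    have hstep : 4 * r⁻¹ ≤ x⁻¹ := by
      rw [show (4:ℝ) * r⁻¹ = (r / 4)⁻¹ by rw [inv_div, div_eq_mul_inv]]
      exact inv_anti₀ hxpos (by rw [le_div_iff₀ (by norm_num : (0:ℝ) < 4)]; linarith)
    have hexp : Real.exp (-(1 / (n:ℝ))) ≤ x := by
      have h := Real.add_one_le_exp (1 / (n:ℝ))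
      calc Real.exp (-(1 / (n:ℝ))) = (Real.exp (1 / (n:ℝ)))⁻¹ := Real.exp_neg _
        _ ≤ (1 + 1 / (n:ℝ))⁻¹ := inv_anti₀ (by positivity) (by linarith)
        _ ≤ x := by
            rw [← one_div, div_le_iff₀ (by positivity), hx,
              show (1:ℝ) / (4 * (n:ℝ)) = (1 / (n:ℝ)) / 4 by ring]
            have ha0 : (0:ℝ) < 1 / (n:ℝ) := by positivity
            have ha1 : (1:ℝ) / (n:ℝ) ≤ 1 := by
              rw [div_le_one hnpos]; linarith
            nlinarith [mul_nonneg ha0.le (sub_nonneg.mpr ha1)]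
    have hxn : Real.exp (-(1:ℝ)) ≤ x ^ n := by
      have h := pow_le_pow_left₀ (Real.exp_pos _).le hexp n
      rwa [← Real.exp_nat_mul, show (n:ℝ) * -(1 / (n:ℝ)) = -1 by field_simp] at h
    have hfin : (4 * r⁻¹) ^ n ≤ Real.exp 1 := by
      calc (4 * r⁻¹) ^ n ≤ (x⁻¹) ^ n := by
            apply pow_le_pow_left₀ (by positivity) hstep
        _ = (x ^ n)⁻¹ := by rw [inv_pow]
        _ ≤ (Real.exp (-(1:ℝ)))⁻¹ := inv_anti₀ (Real.exp_pos _) hxn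
        _ = Real.exp 1 := by rw [← Real.exp_neg]; norm_num
    calc ℓ * (4 * r⁻¹) ^ n ≤ ℓ * Real.exp 1 := by
          exact mul_le_mul_of_nonneg_left hfin hℓ.le
      _ = Real.exp 1 * ℓ := mul_comm _ _
end

section
/- Let M ≥ 1 and consider the random walk S_k = Y₁ + ⋯ + Y_k where Y_j are i.i.d. taking values +1, −1 each with probability 1/4 and 0 with probability 1/2. Then P(S_{M²} ≤ −M) is bounded below by a positive constant independent of M, for all M large enough. -/
/-!
Each step is distributed as `ξ + ξ' - 1` for two fair coins `ξ, ξ'`, so with `n = M²` the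
count is `∑_{k ≤ n - M} C(2n, k)`. The window `n - 2M ≤ k ≤ n - M` contributes `M + 1`
terms, each at least `C(2n, n - 2M)`. Stepping down from the middle costs a factor at least
`(n - 2M)/(n + 2M) = (M - 2)/(M + 2)` per step, so `C(2n, n - 2M) ≥ e⁻¹⁶ C(2n, n)`, and
`C(2n, n) ≥ 4ⁿ / (2√n) = 4ⁿ / (2M)`. Altogether the probability is at least `e⁻¹⁶ / 2`.
-/

open Finset

/-- Step `a` is encoded by the set of heads of two fair coins. -/
def stepCoinsEquiv : Fin 4 ≃ Finset Bool where
  toFun := ![{true}, univ, ∅, {false}]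
  invFun s := if true ∈ s then (if false ∈ s then 1 else 0) else (if false ∈ s then 3 else 2)
  left_inv := by decide
  right_inv := by decide

lemma card_stepCoinsEquiv (a : Fin 4) :
    (#(stepCoinsEquiv a) : ℤ) = (![0, 1, -1, 0] : Fin 4 → ℤ) a + 1 := by
  fin_cases a <;> rfl

def piFinsetEquivFinsetProd (α β : Type*) [Fintype α] [Fintype β] [DecidableEq α]
    [DecidableEq β] : (α → Finset β) ≃ Finset (α × β) where
  toFun f := univ.filter fun p => p.2 ∈ f p.1
  invFun s a := univ.filter fun b => (a, b) ∈ s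
  left_inv f := by ext; simp
  right_inv s := by ext; simp

lemma card_piFinsetEquivFinsetProd {α β : Type*} [Fintype α] [Fintype β] [DecidableEq α]
    [DecidableEq β] (f : α → Finset β) : #(piFinsetEquivFinsetProd α β f) = ∑ a, #(f a) := by
  rw [piFinsetEquivFinsetProd, Equiv.coe_fn_mk, card_filter, Fintype.sum_prod_type]
  simp

lemma card_finset_card_le (α : Type*) [Fintype α] (t : ℕ) :
    Fintype.card {s : Finset α // #s ≤ t} =
      ∑ k ∈ range (t + 1), (Fintype.card α).choose k := by
  classical
  rw [Fintype.card_subtype, card_eq_sum_card_fiberwise (f := card) (t := range (t + 1))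
    (fun s hs => by simpa [Nat.lt_succ_iff] using hs)]
  refine sum_congr rfl fun k hk => ?_
  rw [filter_filter, ← Fintype.card_finset_len, Fintype.card_subtype]
  congr 1
  ext s
  simp only [mem_filter, mem_univ, true_and, and_iff_right_iff_imp]
  intro h
  simpa [h, Nat.lt_succ_iff] using hk

lemma card_lazyWalk_le_neg (n t : ℕ) (ht : t ≤ n) :
    Nat.card {i : Fin n → Fin 4 // ∑ j, (![0, 1, -1, 0] : Fin 4 → ℤ) (i j) ≤ -(t : ℤ)} =
      ∑ k ∈ range (n - t + 1), (2 * n).choose k := by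
  let e := (Equiv.arrowCongr (Equiv.refl (Fin n)) stepCoinsEquiv).trans
    (piFinsetEquivFinsetProd (Fin n) Bool)
  have hcard (i : Fin n → Fin 4) :
      (#(e i) : ℤ) = ∑ j, (![0, 1, -1, 0] : Fin 4 → ℤ) (i j) + n := by
    simp [e, card_piFinsetEquivFinsetProd, card_stepCoinsEquiv, sum_add_distrib]
  rw [Nat.card_congr (e.subtypeEquiv (p := fun i => _ ≤ -(t : ℤ)) (q := fun s => #s ≤ n - t)
      fun i => by have := hcard i; omega),
    Nat.card_eq_fintype_card, card_finset_card_le, Fintype.card_prod, Fintype.card_fin,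
    Fintype.card_bool, mul_comm]

lemma centralBinom_mul_pow_le_choose_mul_pow {n d j : ℕ} (hjd : j ≤ d) (hdn : d ≤ n) :
    n.centralBinom * (n - d) ^ j ≤ (2 * n).choose (n - j) * (n + d) ^ j := by
  induction j with
  | zero => simp [Nat.centralBinom_eq_two_mul_choose]
  | succ j ih =>
    have hrec := Nat.choose_succ_right_eq (2 * n) (n - (j + 1))
    rw [show n - (j + 1) + 1 = n - j by omega, show 2 * n - (n - (j + 1)) = n + j + 1 by omega]
      at hrec
    have hstep : (2 * n).choose (n - j) * (n - d) ≤ (2 * n).choose (n - (j + 1)) * (n + d) := by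
      refine Nat.le_of_mul_le_mul_right ?_ (show 0 < n + j + 1 by omega)
      calc (2 * n).choose (n - j) * (n - d) * (n + j + 1)
          ≤ (2 * n).choose (n - j) * (n - j) * (n + d) := by
            rw [mul_assoc, mul_assoc]
            refine Nat.mul_le_mul_left _ ?_
            zify [hdn, show j ≤ n by omega]
            nlinarith
        _ = (2 * n).choose (n - (j + 1)) * (n + d) * (n + j + 1) := by rw [hrec]; ring
    calc n.centralBinom * (n - d) ^ (j + 1) = n.centralBinom * (n - d) ^ j * (n - d) := by ring
      _ ≤ (2 * n).choose (n - j) * (n + d) ^ j * (n - d) := Nat.mul_le_mul_right _ (ih (by omega))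
      _ = (2 * n).choose (n - j) * (n - d) * (n + d) ^ j := by ring
      _ ≤ (2 * n).choose (n - (j + 1)) * (n + d) * (n + d) ^ j := by gcongr
      _ = (2 * n).choose (n - (j + 1)) * (n + d) ^ (j + 1) := by ring

lemma add_pow_le_exp_mul_pow {a : ℝ} (ha : 0 < a) {b : ℝ} (hb : 0 ≤ b) (k : ℕ) :
    (a + b) ^ k ≤ Real.exp (k * b / a) * a ^ k := by
  calc (a + b) ^ k = (b / a + 1) ^ k * a ^ k := by rw [← mul_pow]; field_simp; ring
    _ ≤ Real.exp (b / a) ^ k * a ^ k := by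
        gcongr
        exact Real.add_one_le_exp _
    _ = Real.exp (k * b / a) * a ^ k := by rw [← Real.exp_nat_mul, mul_div_assoc]

lemma choose_le_choose_of_le_half {m a b : ℕ} (hab : a ≤ b) (hb : b ≤ m / 2) :
    m.choose a ≤ m.choose b := by
  induction b, hab using Nat.le_induction with
  | base => rfl
  | succ b _ ih => exact (ih (by omega)).trans (Nat.choose_le_succ_of_lt_half_left (by omega))

lemma mul_choose_le_sum_range_choose {m a t : ℕ} (ht : t ≤ m / 2) :
    (t + 1 - a) * m.choose a ≤ ∑ k ∈ range (t + 1), m.choose k := by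
  calc (t + 1 - a) * m.choose a = ∑ _k ∈ Icc a t, m.choose a := by simp
    _ ≤ ∑ k ∈ Icc a t, m.choose k := sum_le_sum fun k hk =>
        choose_le_choose_of_le_half (mem_Icc.1 hk).1 ((mem_Icc.1 hk).2.trans ht)
    _ ≤ ∑ k ∈ range (t + 1), m.choose k :=
        sum_le_sum_of_subset fun k hk => by simp at hk ⊢; omega

/-- `4ⁿ ≤ 2√n · C(2n, n)`, squared so that the induction stays in `ℕ`. -/
lemma sq_four_pow_le_mul_sq_centralBinom {n : ℕ} (hn : 0 < n) :
    (4 ^ n) ^ 2 ≤ 4 * n * n.centralBinom ^ 2 := by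
  induction n, hn using Nat.le_induction with
  | base => decide
  | succ n hn ih =>
    have hrec := Nat.succ_mul_centralBinom_succ n
    refine Nat.le_of_mul_le_mul_right ?_ (show 0 < n + 1 by omega)
    calc (4 ^ (n + 1)) ^ 2 * (n + 1) = 16 * (4 ^ n) ^ 2 * (n + 1) := by ring
      _ ≤ 16 * (4 * n * n.centralBinom ^ 2) * (n + 1) := by gcongr
      _ ≤ 4 * ((2 * (2 * n + 1)) * n.centralBinom) ^ 2 := by
          nlinarith [Nat.zero_le (n.centralBinom ^ 2)]
      _ = 4 * (n + 1) * (n + 1).centralBinom ^ 2 * (n + 1) := by rw [← hrec]; ring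

lemma four_pow_sq_le_two_mul_mul_centralBinom_sq {M : ℕ} (hM : 0 < M) :
    4 ^ M ^ 2 ≤ 2 * M * (M ^ 2).centralBinom := by
  refine (Nat.pow_le_pow_iff_left two_ne_zero).1 ?_
  calc (4 ^ M ^ 2) ^ 2 ≤ 4 * M ^ 2 * (M ^ 2).centralBinom ^ 2 :=
        sq_four_pow_le_mul_sq_centralBinom (by positivity)
    _ = (2 * M * (M ^ 2).centralBinom) ^ 2 := by ring

lemma exp_neg_mul_centralBinom_le_choose {M : ℕ} (hM : 4 ≤ M) :
    Real.exp (-16) * (M ^ 2).centralBinom ≤ (2 * M ^ 2).choose (M ^ 2 - 2 * M) := by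
  have hratio := centralBinom_mul_pow_le_choose_mul_pow (n := M ^ 2) (le_refl (2 * M))
    (by nlinarith)
  have hsub : M ^ 2 - 2 * M = M * (M - 2) := by rw [Nat.mul_sub]; ring_nf
  rw [hsub, show M ^ 2 + 2 * M = M * (M + 2) by ring, mul_pow, mul_pow] at hratio
  rw [hsub]
  have hcancel : (M ^ 2).centralBinom * (M - 2) ^ (2 * M) ≤
      (2 * M ^ 2).choose (M * (M - 2)) * (M + 2) ^ (2 * M) := by
    refine le_of_mul_le_mul_left (a := M ^ (2 * M)) ?_ (by positivity)
    calc _ = _ := by ring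
      _ ≤ _ := hratio
      _ = _ := by ring
  have hx : (4 : ℝ) ≤ M := by exact_mod_cast hM
  have hgrowth : ((M : ℝ) + 2) ^ (2 * M) ≤ Real.exp 16 * ((M : ℝ) - 2) ^ (2 * M) := by
    calc ((M : ℝ) + 2) ^ (2 * M) = ((M - 2) + 4) ^ (2 * M) := by ring
      _ ≤ Real.exp ((2 * M : ℕ) * 4 / (M - 2)) * ((M : ℝ) - 2) ^ (2 * M) :=
          add_pow_le_exp_mul_pow (by linarith) (by norm_num) _
      _ ≤ Real.exp 16 * ((M : ℝ) - 2) ^ (2 * M) := by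
          refine mul_le_mul_of_nonneg_right (Real.exp_le_exp.2 ?_) (pow_nonneg (by linarith) _)
          rw [div_le_iff₀ (by linarith)]
          push_cast
          linarith
  have hcast : ((M ^ 2).centralBinom : ℝ) * ((M : ℝ) - 2) ^ (2 * M) ≤
      (2 * M ^ 2).choose (M * (M - 2)) * ((M : ℝ) + 2) ^ (2 * M) := by
    have h2 : 2 ≤ M := by omega
    exact_mod_cast hcancel
  refine le_of_mul_le_mul_right ?_ (by positivity : (0 : ℝ) < ((M : ℝ) + 2) ^ (2 * M))
  calc Real.exp (-16) * (M ^ 2).centralBinom * ((M : ℝ) + 2) ^ (2 * M)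
      ≤ Real.exp (-16) * (M ^ 2).centralBinom * (Real.exp 16 * ((M : ℝ) - 2) ^ (2 * M)) := by
        gcongr
    _ = (M ^ 2).centralBinom * ((M : ℝ) - 2) ^ (2 * M) := by
        rw [mul_mul_mul_comm, ← Real.exp_add]; norm_num
    _ ≤ _ := hcast

/-- For the random walk `S_k = Y₁ + ⋯ + Y_k` with i.i.d. steps taking values `+1, -1` each with
probability `1/4` and `0` with probability `1/2` (coded by `Y(1)=Y(4)=0, Y(2)=1, Y(3)=-1` on
`{1,2,3,4}^{M²}` with the uniform product measure), the probability `P(S_{M²} ≤ -M)` is bounded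
below by a positive constant independent of `M`, for all `M` large enough. -/
theorem stmt_10 :
    ∃ c : ℝ, 0 < c ∧ ∃ M₀ : ℕ, ∀ M : ℕ, M₀ ≤ M → 1 ≤ M →
      c ≤ (Nat.card {i : Fin (M ^ 2) → Fin 4 //
          (∑ j, (![0, 1, -1, 0] : Fin 4 → ℤ) (i j)) ≤ -(M : ℤ)} : ℝ) / 4 ^ (M ^ 2) := by
  refine ⟨Real.exp (-16) / 2, by positivity, 4, fun M hM _ => ?_⟩
  have hMsq : 2 * M ≤ M ^ 2 := by nlinarith
  have hwindow := mul_choose_le_sum_range_choose (m := 2 * M ^ 2) (a := M ^ 2 - 2 * M)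
    (t := M ^ 2 - M) (by omega)
  rw [show M ^ 2 - M + 1 - (M ^ 2 - 2 * M) = M + 1 by omega] at hwindow
  have hcentral := four_pow_sq_le_two_mul_mul_centralBinom_sq (M := M) (by omega)
  have hratio := exp_neg_mul_centralBinom_le_choose hM
  rw [card_lazyWalk_le_neg _ _ (by nlinarith), le_div_iff₀ (by positivity)]
  calc Real.exp (-16) / 2 * 4 ^ M ^ 2
      ≤ Real.exp (-16) / 2 * (2 * M * (M ^ 2).centralBinom) := by gcongr; exact_mod_cast hcentral
    _ ≤ (M + 1) * (Real.exp (-16) * (M ^ 2).centralBinom) := by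
        have : 0 ≤ Real.exp (-16) * (M ^ 2).centralBinom := by positivity
        nlinarith
    _ ≤ (M + 1) * (2 * M ^ 2).choose (M ^ 2 - 2 * M) := by gcongr
    _ ≤ _ := by exact_mod_cast hwindow
end

section
/- In the snowflake construction with angle α ≤ 1/M, the sub-arc Ŝ_{i₁,…,i_k} of Γ generated by the segment S_{i₁,…,i_k} satisfies H¹(Ŝ_{i₁,…,i_k}) ≤ C · H¹(S_{i₁,…,i_k}) for an absolute constant C. -/
/-- Estimate (2.7): in the snowflake construction with angle `0 ≤ α ≤ 1/M`, the sub-arc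
`Ŝ_{i₁,…,i_k}` of `Γ` generated by a generation-`k` segment `S_{i₁,…,i_k}` consists of
`4^{M²-k}` final segments of length `ℓ·(2(1+cos α))^{-M²}`, while
`H¹(S_{i₁,…,i_k}) = ℓ·(2(1+cos α))^{-k}`; hence
`H¹(Ŝ_{i₁,…,i_k}) ≤ C · H¹(S_{i₁,…,i_k})` with the absolute constant `C = e`. -/
theorem stmt_13 (M k : ℕ) (α ℓ : ℝ) (hM : 0 < M) (hα₀ : 0 ≤ α) (hα₁ : α ≤ 1 / M)
    (hℓ : 0 < ℓ) (hk : k ≤ M ^ 2) :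
    (4 : ℝ) ^ (M ^ 2 - k) * (ℓ * ((2 * (1 + Real.cos α))⁻¹) ^ (M ^ 2)) ≤
      Real.exp 1 * (ℓ * ((2 * (1 + Real.cos α))⁻¹) ^ k) := by
  have hMR : (1:ℝ) ≤ (M:ℝ) := by exact_mod_cast hM
  have hM2 : (1:ℝ) ≤ (M:ℝ)^2 := by nlinarith
  have hM2pos : (0:ℝ) < (M:ℝ)^2 := by positivity
  have hcos : 1 - α^2/2 ≤ Real.cos α := Real.one_sub_sq_div_two_le_cos
  have hα2 : α^2 ≤ 1/(M:ℝ)^2 := by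
    have h := mul_self_le_mul_self hα₀ hα₁
    calc α^2 = α*α := sq α
      _ ≤ (1/M)*(1/M) := h
      _ = 1/(M:ℝ)^2 := by ring
  have hα2' : α^2 ≤ 1 := le_trans hα2 (by rw [div_le_one hM2pos]; exact hM2)
  have hcosge : (1:ℝ)/2 ≤ Real.cos α := by nlinarith
  have hpos : (0:ℝ) < 1 + Real.cos α := by linarith
  set n := M^2 - k with hn
  have hsum : M^2 = k + n := by omega
  have hratio : 2 / (1 + Real.cos α) ≤ Real.exp (1/(M:ℝ)^2) := by
    have h1 : 2 / (1 + Real.cos α) ≤ 1 + 1/(M:ℝ)^2 := by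
      rw [div_le_iff₀ hpos]
      have hinv : (0:ℝ) < 1/(M:ℝ)^2 := by positivity
      have hinv1 : (1:ℝ)/(M:ℝ)^2 ≤ 1 := by rw [div_le_one hM2pos]; exact hM2
      nlinarith [mul_pos hM2pos hM2pos]
    have h2 : 1 + 1/(M:ℝ)^2 ≤ Real.exp (1/(M:ℝ)^2) := by
      have := Real.add_one_le_exp (1/(M:ℝ)^2); linarith
    linarith
  have hcpos : (0:ℝ) < (2*(1+Real.cos α))⁻¹ := by positivity
  have hkey : ((4:ℝ) * (2*(1+Real.cos α))⁻¹)^n ≤ Real.exp 1 := by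
    have hbase : (4:ℝ) * (2*(1+Real.cos α))⁻¹ = 2/(1+Real.cos α) := by
      field_simp; ring
    rw [hbase]
    calc (2/(1+Real.cos α))^n ≤ (Real.exp (1/(M:ℝ)^2))^n := by
          apply pow_le_pow_left₀ (by positivity) hratio
      _ = Real.exp ((n:ℝ)/(M:ℝ)^2) := by
          rw [← Real.exp_nat_mul]; ring_nf
      _ ≤ Real.exp 1 := by
          apply Real.exp_le_exp.mpr
          rw [div_le_one hM2pos]
          have : (n:ℝ) ≤ ((M^2 : ℕ) : ℝ) := by exact_mod_cast (by omega : n ≤ M^2)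
          push_cast at this; linarith
  calc (4:ℝ)^n * (ℓ * ((2*(1+Real.cos α))⁻¹)^(M^2))
      = ((4:ℝ) * (2*(1+Real.cos α))⁻¹)^n * (ℓ * ((2*(1+Real.cos α))⁻¹)^k) := by
        rw [hsum, pow_add, mul_pow]; ring
    _ ≤ Real.exp 1 * (ℓ * ((2*(1+Real.cos α))⁻¹)^k) := by
        apply mul_le_mul_of_nonneg_right hkey (by positivity)
end
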